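/- If ũ satisfies H(ũ) = 0 and D_J^{p^{(0)}}(ũ, u^{(0)}) < +∞, then the Bregman iterates satisfy the convergence rate 0 ≤ H(u^{(k)}) ≤ D_J^{p^{(0)}}(ũ, u^{(0)}) / (λ k) for all k ≥ 1; in particular H(u^{(k)}) → 0. -/

import Mathlib

/-! Since `p k` is a subgradient of `J` at `u k`, the Bregman distances
`D k = D_J^{p k}(ũ, u k)` are nonnegative. The three-point identity for Bregman divergences,
the update rule for `p` and the gradient inequality for the convex function `H` give the descent
estimate `D (k+1) + λ H(u (k+1)) ≤ D k + λ H(ũ) = D k`, while comparing the minimiser `u (k+1)`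
with `u k` shows that `H(u k)` is nonincreasing. Telescoping,
`k λ H(u k) ≤ λ ∑_{j=1}^{k} H(u j) ≤ D 0`.
-/

open RealInnerProductSpace

noncomputable def bregman {n : ℕ} (J : EuclideanSpace ℝ (Fin n) → ℝ)
    (p x y : EuclideanSpace ℝ (Fin n)) : ℝ :=
  J x - J y - ⟪p, x - y⟫

open Set Filter

theorem ConvexOn.apply_sub_le_sub_of_hasFDerivAt {E : Type*} [NormedAddCommGroup E]
    [NormedSpace ℝ E] {s : Set E} {f : E → ℝ} {f' : E →L[ℝ] ℝ} {x y : E}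
    (hf : ConvexOn ℝ s f) (hx : x ∈ s) (hy : y ∈ s) (hf' : HasFDerivAt f f' y) :
    f' (x - y) ≤ f x - f y := by
  have hline :
      ConvexOn ℝ (AffineMap.lineMap (k := ℝ) y x ⁻¹' s) (f ∘ AffineMap.lineMap y x) :=
    hf.comp_affineMap _
  have hderiv : HasDerivAt (f ∘ AffineMap.lineMap (k := ℝ) y x) (f' (x - y)) 0 := by
    refine hf'.comp_hasDerivAt_of_eq 0 AffineMap.hasDerivAt_lineMap ?_
    simp
  simpa [slope] using hline.le_slope_of_hasDerivAt (by simpa using hy) (by simpa using hx)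
    zero_lt_one hderiv

theorem ConvexOn.inner_gradient_le_sub {E : Type*} [NormedAddCommGroup E]
    [InnerProductSpace ℝ E] [CompleteSpace E] {s : Set E} {f : E → ℝ} {x y : E}
    (hf : ConvexOn ℝ s f) (hx : x ∈ s) (hy : y ∈ s) (hd : DifferentiableAt ℝ f y) :
    ⟪gradient f y, x - y⟫ ≤ f x - f y := by
  simpa using hf.apply_sub_le_sub_of_hasFDerivAt hx hy
    (hasGradientAt_iff_hasFDerivAt.mp hd.hasGradientAt)

theorem natCast_mul_add_le_of_antitone {a D : ℕ → ℝ} (ha : Antitone a)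
    (hD : ∀ k, D (k + 1) + a (k + 1) ≤ D k) (k : ℕ) : k * a k + D k ≤ D 0 := by
  induction k with
  | zero => simp
  | succ k ih =>
    have hk : (k : ℝ) * a (k + 1) ≤ k * a k :=
      mul_le_mul_of_nonneg_left (ha k.le_succ) k.cast_nonneg
    push_cast
    linarith [hD k]

section Bregman

variable {n : ℕ} {J : EuclideanSpace ℝ (Fin n) → ℝ}

@[simp]
theorem bregman_self (p x : EuclideanSpace ℝ (Fin n)) : bregman J p x x = 0 := by
  simp [bregman]

theorem bregman_three_point (p q x y z : EuclideanSpace ℝ (Fin n)) :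
    bregman J q x z = bregman J p x y - bregman J p z y + ⟪p - q, x - z⟫ := by
  simp only [bregman, inner_sub_left, inner_sub_right]
  ring

end Bregman

structure IsBregmanIteration {n : ℕ} (J H : EuclideanSpace ℝ (Fin n) → ℝ) (lam : ℝ)
    (u p : ℕ → EuclideanSpace ℝ (Fin n)) : Prop where
  subgradient : ∀ k x, J x - J (u k) ≥ ⟪p k, x - u k⟫
  isMin : ∀ k x, bregman J (p k) (u (k + 1)) (u k) + lam * H (u (k + 1)) ≤
      bregman J (p k) x (u k) + lam * H x
  update : ∀ k, p (k + 1) = p k - lam • gradient H (u (k + 1))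

namespace IsBregmanIteration

variable {n : ℕ} {J H : EuclideanSpace ℝ (Fin n) → ℝ} {lam : ℝ}
  {u p : ℕ → EuclideanSpace ℝ (Fin n)}

theorem bregman_nonneg (h : IsBregmanIteration J H lam u p) (k : ℕ)
    (x : EuclideanSpace ℝ (Fin n)) : 0 ≤ bregman J (p k) x (u k) :=
  sub_nonneg.mpr (h.subgradient k x)

theorem antitone (h : IsBregmanIteration J H lam u p) (hlam : 0 < lam) :
    Antitone fun k => H (u k) := by
  refine antitone_nat_of_succ_le fun k => le_of_mul_le_mul_left ?_ hlam
  linarith [h.isMin k (u k), h.bregman_nonneg k (u (k + 1)), bregman_self (J := J) (p k) (u k)]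

theorem bregman_add_le (h : IsBregmanIteration J H lam u p) (hH : ConvexOn ℝ univ H)
    (hHdiff : Differentiable ℝ H) (hlam : 0 ≤ lam) (x : EuclideanSpace ℝ (Fin n)) (k : ℕ) :
    bregman J (p (k + 1)) x (u (k + 1)) + lam * H (u (k + 1)) ≤
      bregman J (p k) x (u k) + lam * H x := by
  have hgrad := hH.inner_gradient_le_sub (mem_univ x) (mem_univ (u (k + 1))) (hHdiff _)
  have hthree := bregman_three_point (J := J) (p k) (p (k + 1)) x (u k) (u (k + 1))
  rw [h.update k, sub_sub_cancel, real_inner_smul_left] at hthree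
  rw [h.update k, hthree]
  linarith [h.bregman_nonneg k (u (k + 1)), mul_le_mul_of_nonneg_left hgrad hlam]

theorem natCast_mul_le (h : IsBregmanIteration J H lam u p) (hH : ConvexOn ℝ univ H)
    (hHdiff : Differentiable ℝ H) (hlam : 0 < lam) {x : EuclideanSpace ℝ (Fin n)}
    (hx : H x = 0) (k : ℕ) : lam * k * H (u k) ≤ bregman J (p 0) x (u 0) := by
  have := natCast_mul_add_le_of_antitone (a := fun k => lam * H (u k))
    (D := fun k => bregman J (p k) x (u k))
    ((h.antitone hlam).const_mul hlam.le)
    (fun k => by simpa [hx] using h.bregman_add_le hH hHdiff hlam.le x k) k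
  linarith [h.bregman_nonneg k x]

end IsBregmanIteration

theorem bregman_iteration_convergence_rate_general {n : ℕ}
    (J H : EuclideanSpace ℝ (Fin n) → ℝ)
    (hH : ConvexOn ℝ Set.univ H)
    (hHnonneg : ∀ u, 0 ≤ H u) (hHdiff : Differentiable ℝ H)
    (lam : ℝ) (hlam : 0 < lam)
    (u p : ℕ → EuclideanSpace ℝ (Fin n))
    (hsub : ∀ k x, J x - J (u k) ≥ ⟪p k, x - u k⟫)
    (hmin : ∀ k x, bregman J (p k) (u (k + 1)) (u k) + lam * H (u (k + 1)) ≤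
      bregman J (p k) x (u k) + lam * H x)
    (hupd : ∀ k, p (k + 1) = p k - lam • gradient H (u (k + 1)))
    (utilde : EuclideanSpace ℝ (Fin n)) (hutilde : H utilde = 0) :
    (∀ k : ℕ, 1 ≤ k →
      0 ≤ H (u k) ∧ H (u k) ≤ bregman J (p 0) utilde (u 0) / (lam * k)) ∧
      Filter.Tendsto (fun k => H (u k)) Filter.atTop (nhds 0) := by
  have hrate := IsBregmanIteration.natCast_mul_le ⟨hsub, hmin, hupd⟩ hH hHdiff hlam hutilde
  have hbound : ∀ k : ℕ, 1 ≤ k →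
      0 ≤ H (u k) ∧ H (u k) ≤ bregman J (p 0) utilde (u 0) / (lam * k) := by
    intro k hk
    have hk : (0 : ℝ) < k := by exact_mod_cast hk
    refine ⟨hHnonneg _, ?_⟩
    rw [le_div_iff₀ (by positivity), mul_comm]
    exact hrate k
  refine ⟨hbound, squeeze_zero' (.of_forall fun k => hHnonneg _) ?_
    (tendsto_const_div_atTop_nhds_zero_nat (bregman J (p 0) utilde (u 0) / lam))⟩
  filter_upwards [eventually_ge_atTop 1] with k hk
  rw [div_div]
  exact (hbound k hk).2

/-- If `H(ũ) = 0`, the Bregman iterates satisfy the convergence rate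
`0 ≤ H(u k) ≤ D_J^{p 0}(ũ, u 0) / (λ k)` for all `k ≥ 1`; in particular `H(u k) → 0`. -/
theorem bregman_iteration_convergence_rate {n : ℕ}
    (J H : EuclideanSpace ℝ (Fin n) → ℝ)
    (hJ : ConvexOn ℝ Set.univ J) (hH : ConvexOn ℝ Set.univ H)
    (hHnonneg : ∀ u, 0 ≤ H u) (hHdiff : Differentiable ℝ H)
    (lam : ℝ) (hlam : 0 < lam)
    (u p : ℕ → EuclideanSpace ℝ (Fin n))
    (hsub : ∀ k x, J x - J (u k) ≥ ⟪p k, x - u k⟫)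
    (hmin : ∀ k x, bregman J (p k) (u (k + 1)) (u k) + lam * H (u (k + 1)) ≤
      bregman J (p k) x (u k) + lam * H x)
    (hupd : ∀ k, p (k + 1) = p k - lam • gradient H (u (k + 1)))
    (utilde : EuclideanSpace ℝ (Fin n)) (hutilde : H utilde = 0) :
    (∀ k : ℕ, 1 ≤ k →
      0 ≤ H (u k) ∧ H (u k) ≤ bregman J (p 0) utilde (u 0) / (lam * k)) ∧
      Filter.Tendsto (fun k => H (u k)) Filter.atTop (nhds 0) :=
  bregman_iteration_convergence_rate_general J H hH hHnonneg hHdiff lam hlam u p hsub hmin hupd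
    utilde hutilde
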